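/- arXiv:1410.0776 — 3 statements merged into one kernel-verified Lean document; each statement's English description precedes it below -/
import Mathlib

section
/- Let A be an n×(n+2) matrix over a field with rank n, and P_A its Plücker matrix. Then P_A has rank exactly 2. -/
/-! For vectors `x y`, expanding `det [y; x; A]` along its first two rows gives
`x ᵥ* P_A ⬝ᵥ y`, so `P_A` is the matrix of the alternating form `(x, y) ↦ det [y; x; A]`.
A repeated row kills the determinant, so `A * P_A = 0` and `rank P_A ≤ 2`. Completing the
independent rows of `A` by two vectors `x, y` to a basis makes `det [y; x; A] ≠ 0`, and then
`P_A` restricted to `span {x, y}` is a nondegenerate alternating `2 × 2` form, so `rank P_A ≥ 2`. -/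

open Matrix

def delCols {n : ℕ} {R : Type*} [CommRing R] (A : Matrix (Fin n) (Fin (n + 2)) R)
    (i j : Fin (n + 2)) (h : (i : ℕ) < (j : ℕ)) : Matrix (Fin n) (Fin n) R :=
  A.submatrix id (fun k =>
    j.succAbove ((⟨(i : ℕ), by have := j.isLt; omega⟩ : Fin (n + 1)).succAbove k))

def pluecker {n : ℕ} {R : Type*} [CommRing R] (A : Matrix (Fin n) (Fin (n + 2)) R) :
    Matrix (Fin (n + 2)) (Fin (n + 2)) R :=
  Matrix.of fun i j =>
    if h : (i : ℕ) < (j : ℕ) then (-1 : R) ^ ((i : ℕ) + (j : ℕ)) * (delCols A i j h).det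
    else if h' : (j : ℕ) < (i : ℕ) then
      -((-1 : R) ^ ((j : ℕ) + (i : ℕ)) * (delCols A j i h').det)
    else 0

theorem dotProduct_vecMul_of_transpose_eq_neg {m R : Type*} [Fintype m] [CommRing R]
    {P : Matrix m m R} (hP : Pᵀ = -P) (x y : m → R) : y ᵥ* P ⬝ᵥ x = -(x ᵥ* P ⬝ᵥ y) := by
  rw [dotProduct_comm, ← mulVec_transpose, dotProduct_mulVec, hP, vecMul_neg, neg_dotProduct]

theorem two_le_rank_of_transpose_eq_neg {m R : Type*} [Fintype m] [CommRing R] [IsDomain R]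
    {P : Matrix m m R} (hP : Pᵀ = -P) {x y : m → R} (hx : x ᵥ* P ⬝ᵥ x = 0)
    (hy : y ᵥ* P ⬝ᵥ y = 0) (hxy : x ᵥ* P ⬝ᵥ y ≠ 0) : 2 ≤ P.rank := by
  set B : Matrix (Fin 2) m R := ![x, y]
  have hBPB : B * P * Bᵀ = !![0, x ᵥ* P ⬝ᵥ y; -(x ᵥ* P ⬝ᵥ y), 0] := by
    ext i j
    rw [mul_apply_eq_vecMul, mul_apply_eq_vecMul, vecMul_transpose, mulVec, dotProduct_comm]
    fin_cases i <;> fin_cases j <;>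
      simp [B, hx, hy, dotProduct_vecMul_of_transpose_eq_neg hP x y]
  have hdet : (B * P * Bᵀ).det ≠ 0 := by
    rw [hBPB, det_fin_two_of]
    simpa using hxy
  calc 2 = (B * P * Bᵀ).rank := by rw [rank_of_det_ne_zero hdet, Fintype.card_fin]
    _ ≤ (B * P).rank := rank_mul_le_left _ _
    _ ≤ P.rank := rank_mul_le_right _ _

theorem linearIndependent_row_of_rank_eq {m n K : Type*} [Fintype m] [Fintype n] [Field K]
    {A : Matrix m n K} (hA : A.rank = Fintype.card m) : LinearIndependent K A.row := by
  rw [linearIndependent_iff_card_eq_finrank_span, Set.finrank, ← rank_eq_finrank_span_row, hA]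

theorem exists_det_vecCons_vecCons_ne_zero {n : ℕ} {K : Type*} [Field K]
    {A : Matrix (Fin n) (Fin (n + 2)) K} (hA : LinearIndependent K A.row) :
    ∃ x y : Fin (n + 2) → K, (of (vecCons y (vecCons x A.row))).det ≠ 0 := by
  obtain ⟨x, hx⟩ := exists_linearIndependent_cons_of_lt_finrank hA (by simp)
  obtain ⟨y, hy⟩ := exists_linearIndependent_cons_of_lt_finrank hx (by simp)
  exact ⟨x, y, ((isUnit_iff_isUnit_det _).mp (linearIndependent_rows_iff_isUnit.mp hy)).ne_zero⟩

section Pluecker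

variable {n : ℕ} {R : Type*} [CommRing R] (A : Matrix (Fin n) (Fin (n + 2)) R)

theorem pluecker_apply_of_lt {i j : Fin (n + 2)} (h : (i : ℕ) < j) :
    pluecker A i j = (-1) ^ ((i : ℕ) + j) * (delCols A i j h).det := by
  simp only [pluecker, of_apply, dif_pos h]

theorem pluecker_transpose : (pluecker A)ᵀ = -pluecker A := by
  ext i j
  rw [transpose_apply, neg_apply]
  simp only [pluecker, of_apply]
  split_ifs <;> first | omega | simp only [neg_neg, neg_zero]

theorem pluecker_apply_self (i : Fin (n + 2)) : pluecker A i i = 0 := by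
  simp [pluecker]

theorem pluecker_succAbove_apply (j : Fin (n + 2)) (q : Fin (n + 1)) :
    pluecker A (j.succAbove q) j =
      (-1) ^ ((j : ℕ) + q) * (A.submatrix id (j.succAbove ∘ q.succAbove)).det := by
  rcases lt_or_ge q.castSucc j with hq | hq
  · rw [Fin.succAbove_of_castSucc_lt _ _ hq, pluecker_apply_of_lt A hq, add_comm]
    rfl
  · rw [Fin.succAbove_of_le_castSucc _ _ hq, ← neg_neg (pluecker A _ _), ← neg_apply,
      ← pluecker_transpose, transpose_apply, pluecker_apply_of_lt A (Fin.le_castSucc_iff.mp hq)]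
    have hcols : delCols A j q.succ (Fin.le_castSucc_iff.mp hq) =
        A.submatrix id (j.succAbove ∘ q.succAbove) := by
      ext r k
      rw [submatrix_apply, Function.comp_apply,
        ← Fin.succAbove_succAbove_succAbove_predAbove, Fin.succAbove_of_le_castSucc _ _ hq,
        Fin.predAbove_of_le_castSucc _ _ hq]
      rfl
    rw [hcols, Fin.val_succ, ← add_assoc, pow_succ]
    ring

theorem vecMul_pluecker (v : Fin (n + 2) → R) (j : Fin (n + 2)) :
    (v ᵥ* pluecker A) j =
      (-1) ^ (j : ℕ) * ((of (vecCons v A.row)).submatrix id j.succAbove).det := by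
  rw [det_succ_row_zero, Finset.mul_sum, vecMul, dotProduct, Fin.sum_univ_succAbove _ j,
    pluecker_apply_self, mul_zero, zero_add]
  refine Finset.sum_congr rfl fun q _ => ?_
  have hminor : ((of (vecCons v A.row)).submatrix id j.succAbove).submatrix Fin.succ q.succAbove =
      A.submatrix id (j.succAbove ∘ q.succAbove) := rfl
  rw [pluecker_succAbove_apply, hminor, pow_add]
  simp only [submatrix_apply, of_apply, cons_val_zero, id_eq]
  ring

theorem det_vecCons_vecCons (x y : Fin (n + 2) → R) :
    (of (vecCons y (vecCons x A.row))).det = x ᵥ* pluecker A ⬝ᵥ y := by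
  rw [det_succ_row_zero, dotProduct]
  refine Finset.sum_congr rfl fun j _ => ?_
  have hminor : (of (vecCons y (vecCons x A.row))).submatrix Fin.succ j.succAbove =
      (of (vecCons x A.row)).submatrix id j.succAbove := rfl
  rw [vecMul_pluecker, hminor]
  simp only [of_apply, cons_val_zero]
  ring

theorem mul_pluecker_eq_zero : A * pluecker A = 0 := by
  ext r j
  rw [mul_apply_eq_vecMul, Matrix.zero_apply, vecMul_pluecker,
    det_zero_of_row_eq (Fin.succ_ne_zero r).symm, mul_zero]
  ext k
  simp

theorem vecMul_pluecker_dotProduct_self (x : Fin (n + 2) → R) : x ᵥ* pluecker A ⬝ᵥ x = 0 := by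
  rw [← det_vecCons_vecCons]
  exact det_zero_of_row_eq (i := 0) (j := 1) zero_ne_one rfl

end Pluecker

/-- over a field, the Plücker matrix of a full-rank `n × (n+2)` matrix has
rank exactly `2`. -/
theorem pluecker_rank_two {n : ℕ} {K : Type*} [Field K] (A : Matrix (Fin n) (Fin (n + 2)) K)
    (hA : A.rank = n) : (pluecker A).rank = 2 := by
  have hupper := rank_add_rank_le_card_of_mul_eq_zero (mul_pluecker_eq_zero A)
  obtain ⟨x, y, hxy⟩ := exists_det_vecCons_vecCons_ne_zero
    (linearIndependent_row_of_rank_eq (by rw [hA, Fintype.card_fin]))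
  have hlower : 2 ≤ (pluecker A).rank :=
    two_le_rank_of_transpose_eq_neg (pluecker_transpose A)
      (vecMul_pluecker_dotProduct_self A x) (vecMul_pluecker_dotProduct_self A y)
      (by rwa [← det_vecCons_vecCons])
  rw [hA, Fintype.card_fin] at hupper
  omega
end

section
/- Let p(u_0,...,u_{n+1}) be an irreducible polynomial over a field K that vanishes identically under the substitution u_i = t^{a_i} f_i(x), where a_0,...,a_{n+1} are columns of an n×(n+2) integer matrix A of rank n and f_i ∈ K[x]. Then every exponent vector v of a monomial of p satisfies the same n linear equations A·v = α for a fixed vector α ∈ ℤ^n; consequently the Newton polytope of p is at most 2-dimensional. -/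
/-!
Multiplying the `k`-th torus coordinate by `s ∈ Kˣ` maps the parametrized variety to itself, so it
preserves its vanishing ideal `(p)`: `p` divides `p(s ^ A k 0 * u₀, …, s ^ A k (n+1) * u_{n+1})`.
That polynomial has the support of `p`, the coefficient of `u ^ v` being multiplied by
`s ^ (A v)_k`; a degree count makes it a constant multiple of `p`, so `s ^ (A v)_k` does not depend
on `v ∈ supp p`, and since `K` is infinite neither does `(A v)_k`. Hence all exponent vectors of `p`
lie in a translate of the real kernel of `A`, which has dimension `(n + 2) - n = 2`.
-/

open MvPolynomial

theorem Finset.prod_zpow_eq_zpow_sum {G ι : Type*} [CommGroup G] (s : Finset ι) (f : ι → ℤ)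
    (a : G) : ∏ i ∈ s, a ^ f i = a ^ ∑ i ∈ s, f i := by
  induction s using Finset.cons_induction <;> simp [*, zpow_add]

theorem eq_of_forall_units_zpow_eq {K : Type*} [Field K] [Infinite K] {m m' : ℤ}
    (h : ∀ s : Kˣ, s ^ m = s ^ m') : m = m' := by
  classical
  by_contra hne
  have hN : 0 < (m - m').natAbs := Int.natAbs_pos.mpr (sub_ne_zero.mpr hne)
  have hroots : {0}ᶜ ⊆ ((Polynomial.nthRoots (m - m').natAbs (1 : K)).toFinset : Set K) := by
    intro x (hx : x ≠ 0)
    have hs : Units.mk0 x hx ^ (m - m').natAbs = 1 := by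
      rw [pow_natAbs_eq_one, zpow_sub, h, mul_inv_cancel]
    rw [Finset.mem_coe, Multiset.mem_toFinset, Polynomial.mem_nthRoots hN]
    simpa only [Units.val_pow_eq_pow_val, Units.val_mk0, Units.val_one] using congrArg Units.val hs
  exact (Set.finite_singleton (0 : K)).infinite_compl ((Finset.finite_toSet _).subset hroots)

theorem exists_C_mul_eq_of_dvd_of_support_subset {σ R : Type*} [CommRing R] [IsDomain R]
    {p q : MvPolynomial σ R} (hp : p ≠ 0) (hpq : p ∣ q) (hsupp : q.support ⊆ p.support) :
    ∃ c, q = C c * p := by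
  obtain ⟨r, rfl⟩ := hpq
  rcases eq_or_ne r 0 with rfl | hr
  · exact ⟨0, by simp⟩
  have hdeg : (p * r).totalDegree ≤ p.totalDegree := Finset.sup_mono hsupp
  rw [totalDegree_mul_of_isDomain hp hr] at hdeg
  exact ⟨coeff 0 r, by rw [mul_comm, ← totalDegree_eq_zero_iff_eq_C.mp (by omega)]⟩

section ScaleVars

variable {σ R : Type*} [CommSemiring R]

noncomputable def scaleVars (c : σ → R) : MvPolynomial σ R →ₐ[R] MvPolynomial σ R :=
  aeval fun i => C (c i) * X i

theorem scaleVars_monomial (c : σ → R) (u : σ →₀ ℕ) (a : R) :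
    scaleVars c (monomial u a) = monomial u ((u.prod fun i e => c i ^ e) * a) := by
  simp only [scaleVars, aeval_eq_bind₁, monomial_eq, map_mul, bind₁_C_right, map_finsuppProd,
    map_pow, bind₁_X_right, mul_pow, Finsupp.prod_mul]
  ring

theorem coeff_scaleVars (c : σ → R) (u : σ →₀ ℕ) (p : MvPolynomial σ R) :
    coeff u (scaleVars c p) = (u.prod fun i e => c i ^ e) * coeff u p := by
  induction p using MvPolynomial.induction_on' with
  | monomial v a =>
    classical
    rw [scaleVars_monomial, coeff_monomial, coeff_monomial]
    split_ifs with h <;> simp [h]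
  | add p q hp hq => rw [map_add, coeff_add, coeff_add, hp, hq, mul_add]

theorem eval_scaleVars (c g : σ → R) (p : MvPolynomial σ R) :
    eval g (scaleVars c p) = eval (c * g) p := by
  induction p using MvPolynomial.induction_on with
  | C a => simp [scaleVars]
  | add p q hp hq => simp [hp, hq]
  | mul_X p i hp => rw [map_mul, eval_mul, hp]; simp [scaleVars]

theorem dvd_scaleVars_of_forall_mul_mem {S : Set (σ → R)} {p : MvPolynomial σ R}
    (hp : ∀ g ∈ S, eval g p = 0) (hgen : ∀ q, (∀ g ∈ S, eval g q = 0) → p ∣ q)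
    {c : σ → R} (hS : ∀ g ∈ S, c * g ∈ S) : p ∣ scaleVars c p :=
  hgen _ fun g hg => by rw [eval_scaleVars]; exact hp _ (hS g hg)

end ScaleVars

section Torus

variable {σ R K : Type*} [CommRing R] [Field K]

theorem finsuppProd_units_zpow (w : σ → ℤ) (s : Rˣ) (u : σ →₀ ℕ) :
    (u.prod fun i e => ((s ^ w i : Rˣ) : R) ^ e) = ((s ^ Finsupp.weight w u : Rˣ) : R) := by
  rw [Finsupp.weight_apply, Finsupp.sum, ← Finset.prod_zpow_eq_zpow_sum, Finsupp.prod,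
    Units.coe_prod]
  refine Finset.prod_congr rfl fun i _ => ?_
  rw [← Units.val_pow_eq_pow_val, ← zpow_natCast, ← zpow_mul, mul_comm, nsmul_eq_mul]

theorem coeff_scaleVars_units_zpow (w : σ → ℤ) (s : Rˣ) (u : σ →₀ ℕ) (p : MvPolynomial σ R) :
    coeff u (scaleVars (fun i => ((s ^ w i : Rˣ) : R)) p) =
      ((s ^ Finsupp.weight w u : Rˣ) : R) * coeff u p := by
  rw [coeff_scaleVars, finsuppProd_units_zpow]

theorem exists_isWeightedHomogeneous_of_forall_dvd_scaleVars [Infinite K] (w : σ → ℤ)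
    {p : MvPolynomial σ K} (hp : p ≠ 0)
    (hdvd : ∀ s : Kˣ, p ∣ scaleVars (fun i => ((s ^ w i : Kˣ) : K)) p) :
    ∃ m, IsWeightedHomogeneous w p m := by
  obtain ⟨u₀, hu₀⟩ := support_nonempty.mpr hp
  refine ⟨Finsupp.weight w u₀, fun u hu => eq_of_forall_units_zpow_eq (K := K) fun s => ?_⟩
  have hsupp : (scaleVars (fun i => ((s ^ w i : Kˣ) : K)) p).support ⊆ p.support := by
    intro v hv
    rw [mem_support_iff, coeff_scaleVars_units_zpow] at hv
    exact mem_support_iff.mpr (right_ne_zero_of_mul hv)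
  obtain ⟨c, hc⟩ := exists_C_mul_eq_of_dvd_of_support_subset hp (hdvd s) hsupp
  have hchar : ∀ v ∈ p.support, ((s ^ Finsupp.weight w v : Kˣ) : K) = c := fun v hv =>
    mul_right_cancel₀ (mem_support_iff.mp hv) <| by
      rw [← coeff_scaleVars_units_zpow, hc, coeff_C_mul]
  exact Units.ext ((hchar u (mem_support_iff.mpr hu)).trans (hchar u₀ hu₀).symm)

end Torus

section AlmostToric

variable {ι σ K : Type*} [Fintype ι] [Field K]

noncomputable def almostToricPoint (A : Matrix ι σ ℤ) (f : σ → Polynomial K) (t : ι → Kˣ)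
    (x : K) : σ → K :=
  fun i => ((∏ k, t k ^ A k i : Kˣ) : K) * (f i).eval x

theorem almostToricPoint_mul_mulSingle [DecidableEq ι] (A : Matrix ι σ ℤ) (f : σ → Polynomial K)
    (t : ι → Kˣ) (x : K) (k : ι) (s : Kˣ) :
    almostToricPoint A f (t * Pi.mulSingle k s) x =
      (fun i => ((s ^ A k i : Kˣ) : K)) * almostToricPoint A f t x := by
  funext i
  have hsingle : ∏ m, Pi.mulSingle k s m ^ A m i = s ^ A k i := by
    rw [Fintype.prod_eq_single k fun m hm => by rw [Pi.mulSingle_eq_of_ne hm, one_zpow],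
      Pi.mulSingle_eq_same]
  simp only [almostToricPoint, Pi.mul_apply, mul_zpow, Finset.prod_mul_distrib, hsingle,
    Units.val_mul]
  ring

end AlmostToric

theorem Finsupp.weight_eq_sum_mul {σ : Type*} [Fintype σ] (w : σ → ℤ) (v : σ →₀ ℕ) :
    Finsupp.weight w v = ∑ i, (v i : ℤ) * w i := by
  simp [Finsupp.weight_apply, Finsupp.sum_fintype]

namespace Matrix

open scoped Matrix

theorem map_intCast_mulVec_natCast {m σ R : Type*} [Fintype σ] [CommRing R]
    (A : Matrix m σ ℤ) (v : σ →₀ ℕ) :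
    A.map (Int.cast : ℤ → R) *ᵥ (fun i => (v i : R)) = fun k => (Finsupp.weight (A k) v : R) := by
  ext k
  simp [mulVec, dotProduct, Finsupp.weight_eq_sum_mul, mul_comm]

theorem mulVec_surjective_map {m n R S : Type*} [Fintype n] [DecidableEq m] [Finite m]
    [Semiring R] [Semiring S] (f : R →+* S) {A : Matrix m n R}
    (h : Function.Surjective A.mulVec) : Function.Surjective (A.map f).mulVec := by
  obtain ⟨B, hB⟩ := mulVec_surjective_iff_exists_right_inverse.mp h
  exact mulVec_surjective_iff_exists_right_inverse.mpr
    ⟨B.map f, by rw [← Matrix.map_mul, hB, Matrix.map_one _ f.map_zero f.map_one]⟩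

section Field

variable {m n K : Type*} [Fintype n] [Field K]

theorem mulVec_surjective_iff_rank_eq_card_height [Fintype m] {A : Matrix m n K} :
    Function.Surjective A.mulVec ↔ A.rank = Fintype.card m := by
  rw [rank, ← Module.finrank_fintype_fun_eq_card (R := K), ← coe_mulVecLin,
    ← LinearMap.range_eq_top]
  exact ⟨fun h => by rw [h, finrank_top], Submodule.eq_top_of_finrank_eq⟩

theorem finrank_ker_mulVecLin_add_rank (A : Matrix m n K) :
    Module.finrank K (LinearMap.ker A.mulVecLin) + A.rank = Fintype.card n := by
  rw [rank, add_comm, LinearMap.finrank_range_add_finrank_ker, Module.finrank_fintype_fun_eq_card]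

end Field

theorem finrank_ker_map_intCast_real {m n : Type*} [Fintype m] [Fintype n]
    (A : Matrix m n ℤ) (hA : (A.map (Int.cast : ℤ → ℚ)).rank = Fintype.card m) :
    Module.finrank ℝ (LinearMap.ker (A.map (Int.cast : ℤ → ℝ)).mulVecLin) + Fintype.card m =
      Fintype.card n := by
  classical
  have hmap : (A.map (Int.cast : ℤ → ℚ)).map (Rat.castHom ℝ) = A.map (Int.cast : ℤ → ℝ) := by
    ext; simp
  have hsurj := mulVec_surjective_map (Rat.castHom ℝ)
    (mulVec_surjective_iff_rank_eq_card_height.mpr hA)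
  rw [hmap, mulVec_surjective_iff_rank_eq_card_height] at hsurj
  rw [← hsurj, finrank_ker_mulVecLin_add_rank]

end Matrix

theorem direction_affineSpan_le_ker {k V W : Type*} [Ring k] [AddCommGroup V] [Module k V]
    [AddCommGroup W] [Module k W] (L : V →ₗ[k] W) {s : Set V} {b : W} (h : ∀ x ∈ s, L x = b) :
    (affineSpan k s).direction ≤ LinearMap.ker L := by
  rw [direction_affineSpan, vectorSpan_def, Submodule.span_le]
  rintro _ ⟨x, hx, y, hy, rfl⟩
  simp [vsub_eq_sub, h x hx, h y hy]

theorem newton_polytope_at_most_two_dimensional_general {n : ℕ} {K : Type*} [Field K] [IsAlgClosed K]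
    (A : Matrix (Fin n) (Fin (n + 2)) ℤ)
    (hA : (A.map (Int.cast : ℤ → ℚ)).rank = n)
    (f : Fin (n + 2) → Polynomial K)
    (p : MvPolynomial (Fin (n + 2)) K) (hirr : Irreducible p)
    (hvan : ∀ (t : Fin n → Kˣ) (x : K),
      MvPolynomial.eval (fun i => ((∏ k, t k ^ A k i : Kˣ) : K) * (f i).eval x) p = 0)
    (hgen : ∀ q : MvPolynomial (Fin (n + 2)) K,
      (∀ (t : Fin n → Kˣ) (x : K),
        MvPolynomial.eval (fun i => ((∏ k, t k ^ A k i : Kˣ) : K) * (f i).eval x) q = 0) →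
      p ∣ q) :
    (∃ α : Fin n → ℤ, ∀ v ∈ p.support, ∀ k, (∑ i, (v i : ℤ) * A k i) = α k) ∧
    Module.finrank ℝ
      (affineSpan ℝ
        ((fun v : Fin (n + 2) →₀ ℕ => (fun i => (v i : ℝ))) '' (p.support : Set _))).direction
      ≤ 2 := by
  set S := Set.range fun tx : (Fin n → Kˣ) × K => almostToricPoint A f tx.1 tx.2
  have hpS : ∀ g ∈ S, eval g p = 0 := by
    rintro _ ⟨⟨t, x⟩, rfl⟩
    exact hvan t x
  have hgenS : ∀ q, (∀ g ∈ S, eval g q = 0) → p ∣ q := fun q hq =>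
    hgen q fun t x => hq _ ⟨(t, x), rfl⟩
  have hS : ∀ k (s : Kˣ) g, g ∈ S → (fun i => ((s ^ A k i : Kˣ) : K)) * g ∈ S := by
    rintro k s _ ⟨⟨t, x⟩, rfl⟩
    refine ⟨(t * Pi.mulSingle k s, x), ?_⟩
    exact almostToricPoint_mul_mulSingle A f t x k s
  choose α hα using fun k => exists_isWeightedHomogeneous_of_forall_dvd_scaleVars (A k)
    hirr.ne_zero fun s => dvd_scaleVars_of_forall_mul_mem hpS hgenS (hS k s)
  have hweight : ∀ v ∈ p.support, ∀ k, Finsupp.weight (A k) v = α k := fun v hv k =>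
    hα k (mem_support_iff.mp hv)
  refine ⟨⟨α, fun v hv k => by rw [← Finsupp.weight_eq_sum_mul, hweight v hv k]⟩, ?_⟩
  have hker := A.finrank_ker_map_intCast_real (by simpa using hA)
  rw [Fintype.card_fin, Fintype.card_fin] at hker
  calc _ ≤ Module.finrank ℝ (LinearMap.ker (A.map (Int.cast : ℤ → ℝ)).mulVecLin) :=
        Submodule.finrank_mono <| direction_affineSpan_le_ker _ (b := fun k => (α k : ℝ)) <| by
          rintro _ ⟨v, hv, rfl⟩
          simp [Matrix.map_intCast_mulVec_natCast, hweight v hv]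
    _ = 2 := by omega

/-- if `p` is the irreducible defining polynomial of the almost-toric
hypersurface parameterized by `u_i = t^{a_i} f_i(x)`, then all exponent vectors `v` of `p`
satisfy the same linear equations `A · v = α`; consequently the Newton polytope of `p`
(the convex hull of the exponent vectors) is at most 2-dimensional. -/
theorem newton_polytope_at_most_two_dimensional {n : ℕ} {K : Type*} [Field K] [IsAlgClosed K]
    (A : Matrix (Fin n) (Fin (n + 2)) ℤ)
    (hA : (A.map (Int.cast : ℤ → ℚ)).rank = n)
    (f : Fin (n + 2) → Polynomial K) (hf : ∀ i, f i ≠ 0)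
    (p : MvPolynomial (Fin (n + 2)) K) (hirr : Irreducible p)
    (hvan : ∀ (t : Fin n → Kˣ) (x : K),
      MvPolynomial.eval (fun i => ((∏ k, t k ^ A k i : Kˣ) : K) * (f i).eval x) p = 0)
    (hgen : ∀ q : MvPolynomial (Fin (n + 2)) K,
      (∀ (t : Fin n → Kˣ) (x : K),
        MvPolynomial.eval (fun i => ((∏ k, t k ^ A k i : Kˣ) : K) * (f i).eval x) q = 0) →
      p ∣ q) :
    (∃ α : Fin n → ℤ, ∀ v ∈ p.support, ∀ k, (∑ i, (v i : ℤ) * A k i) = α k) ∧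
    Module.finrank ℝ
      (affineSpan ℝ
        ((fun v : Fin (n + 2) →₀ ℕ => (fun i => (v i : ℝ))) '' (p.support : Set _))).direction
      ≤ 2 :=
  newton_polytope_at_most_two_dimensional_general A hA f p hirr hvan hgen
end

section
/- Let A be an n×(n+2) integer matrix of rank n. For column vectors a, b ∈ ℤ^{n+2}, the determinant of the (n+2)×(n+2) matrix whose first two columns are b and a and whose remaining columns are the rows of A transposed satisfies det([b | a | A^T]) = δ · a^T P_A b, where P_A is the Plücker matrix of A and δ is the gcd of all n×n minors det(A_{[i,j]}). -/
open Matrix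

/-!
Transpose, so that `b` and `a` become the first two rows, and expand the determinant by
cofactors along these two rows: the coefficient of `a i * b j` is the signed minor of `A` with
columns `i` and `j` deleted, which is the Plücker coordinate `pluecker A i j`. Since `δ` divides
every Plücker coordinate, the normalization by `δ⁻¹` cancels, also when `δ = 0` (where the
junk value `0⁻¹ = 0` appears).
-/

section

variable {R : Type*} [CommRing R] {n : ℕ}

theorem det_vecCons_vecCons_s13 (A : Matrix (Fin n) (Fin (n + 2)) R) (a b : Fin (n + 2) → R) :
    (of (vecCons b (vecCons a A))).det = ∑ j : Fin (n + 2), (-1) ^ (j : ℕ) * b j *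
      ∑ k : Fin (n + 1), (-1) ^ (k : ℕ) * a (j.succAbove k) *
        (A.submatrix id (j.succAbove ∘ k.succAbove)).det := by
  simp only [det_succ_row_zero, submatrix_apply, of_apply, cons_val_zero, cons_val_succ]
  rfl

theorem pluecker_succAbove_left (A : Matrix (Fin n) (Fin (n + 2)) R) (j : Fin (n + 2))
    (k : Fin (n + 1)) :
    pluecker A (j.succAbove k) j =
      (-1) ^ ((j : ℕ) + k) * (A.submatrix id (j.succAbove ∘ k.succAbove)).det := by
  rcases Fin.lt_or_le k.castSucc j with h | h
  · have h' : ((k.castSucc : Fin (n + 2)) : ℕ) < j := h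
    simp only [pluecker, of_apply, Fin.succAbove_of_castSucc_lt _ _ h, dif_pos h', add_comm]
    rfl
  · have h' : (j : ℕ) < (k.succ : Fin (n + 2)) := Nat.lt_succ_of_le h
    have hcols : (fun l => k.succ.succAbove
        ((⟨(j : ℕ), by omega⟩ : Fin (n + 1)).succAbove l)) = j.succAbove ∘ k.succAbove := by
      funext l
      rw [Function.comp_apply, ← Fin.succAbove_succAbove_succAbove_predAbove j k l,
        Fin.succAbove_of_le_castSucc _ _ h, Fin.predAbove_of_le_castSucc _ _ h]
      rfl
    simp only [pluecker, of_apply, Fin.succAbove_of_le_castSucc _ _ h, dif_neg h'.not_gt,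
      dif_pos h', delCols, hcols]
    rw [Fin.val_succ, ← add_assoc, pow_succ]
    ring

theorem pluecker_self (A : Matrix (Fin n) (Fin (n + 2)) R) (i : Fin (n + 2)) :
    pluecker A i i = 0 := by
  simp [pluecker]

theorem det_vecCons_vecCons_eq_dotProduct_pluecker_mulVec (A : Matrix (Fin n) (Fin (n + 2)) R)
    (a b : Fin (n + 2) → R) :
    (of (vecCons b (vecCons a A))).det = a ⬝ᵥ pluecker A *ᵥ b := by
  rw [det_vecCons_vecCons_s13, dotProduct_mulVec, dotProduct_comm]
  refine Finset.sum_congr rfl fun j _ => ?_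
  rw [vecMul, dotProduct, Fin.sum_univ_succAbove _ j, pluecker_self, mul_zero, zero_add,
    Finset.mul_sum, Finset.mul_sum]
  refine Finset.sum_congr rfl fun k _ => ?_
  rw [pluecker_succAbove_left, pow_add]
  ring

theorem dvd_pluecker_of_forall_dvd_det_delCols {d : R} (A : Matrix (Fin n) (Fin (n + 2)) R)
    (hd : ∀ (i j : Fin (n + 2)) (h : (i : ℕ) < j), d ∣ (delCols A i j h).det)
    (i j : Fin (n + 2)) :
    d ∣ pluecker A i j := by
  simp only [pluecker, of_apply]
  split_ifs with hij hji
  · exact (hd i j hij).mul_left _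
  · exact ((hd j i hji).mul_left _).neg_right
  · exact dvd_zero d

theorem dvd_dotProduct_mulVec {m o : Type*} [Fintype m] [Fintype o] {d : R} {P : Matrix m o R}
    (hP : ∀ i j, d ∣ P i j) (v : m → R) (w : o → R) : d ∣ v ⬝ᵥ P *ᵥ w :=
  Finset.dvd_sum fun i _ => (Finset.dvd_sum fun j _ => (hP i j).mul_right _).mul_left _

end

/-- for column vectors `a, b ∈ ℤ^{n+2}`, the determinant of the square matrix
`[b | a | Aᵀ]` (first column `b`, second column `a`, remaining columns the rows of `A`)
equals `δ · aᵀ P_A b`, where `δ` is the gcd of the `n × n` minors of `A` and `P_A` is the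
(δ-normalized) Plücker matrix. -/
theorem det_eq_delta_mul_pluecker_pairing {n : ℕ}
    (A : Matrix (Fin n) (Fin (n + 2)) ℤ)
    (a b : Fin (n + 2) → ℤ) (δ : ℤ)
    (hδ : δ = Finset.gcd Finset.univ (fun p : Fin (n + 2) × Fin (n + 2) =>
      if h : (p.1 : ℕ) < (p.2 : ℕ) then (delCols A p.1 p.2 h).det else 0))
    (M : Matrix (Fin (n + 2)) (Fin (n + 2)) ℤ)
    (hM : M = Matrix.of fun (r c : Fin (n + 2)) =>
      if h0 : (c : ℕ) = 0 then b r
      else if h1 : (c : ℕ) = 1 then a r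
      else A ⟨(c : ℕ) - 2, by have := c.isLt; omega⟩ r) :
    (M.det : ℚ) = (δ : ℚ) *
      ((fun i => (a i : ℚ)) ⬝ᵥ
        ((δ : ℚ)⁻¹ • (pluecker A).map (Int.cast : ℤ → ℚ)).mulVec (fun i => (b i : ℚ))) := by
  have hMT : Mᵀ = of (vecCons b (vecCons a A)) := by
    subst hM
    ext r c
    refine Fin.cases ?_ (Fin.cases ?_ fun k => ?_) r <;> rfl
  have hδdvd : δ ∣ a ⬝ᵥ pluecker A *ᵥ b := by
    refine dvd_dotProduct_mulVec (dvd_pluecker_of_forall_dvd_det_delCols A fun i j h => ?_) a b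
    rw [hδ]
    exact (Finset.gcd_dvd (Finset.mem_univ (i, j))).trans (by simp [h])
  have hcast : ((a ⬝ᵥ pluecker A *ᵥ b : ℤ) : ℚ) =
      (fun i => (a i : ℚ)) ⬝ᵥ (pluecker A).map (Int.cast : ℤ → ℚ) *ᵥ (fun i => (b i : ℚ)) := by
    simp [dotProduct, mulVec]
  obtain ⟨q, hq⟩ := hδdvd
  rw [← det_transpose, hMT, det_vecCons_vecCons_eq_dotProduct_pluecker_mulVec, smul_mulVec,
    dotProduct_smul, smul_eq_mul, ← hcast, hq, Int.cast_mul, ← mul_assoc, ← mul_assoc,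
    mul_inv_mul_cancel]
end
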